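/- arXiv:2401.04640 — 2 statements merged into one kernel-verified Lean document; each statement's English description precedes it below -/
import Mathlib

section
/- Let ψ : ℝⁿ → ℝ ∪ {+∞} be proper closed convex and f : ℝⁿ → ℝ differentiable with L-Lipschitz gradient (L > 0); set F = f + ψ, assume F has nonempty minimizer set X* with minimal value F*, let q ∈ [1,2), and let γ satisfy γL ∈ (0,1). Fix x₀, suppose F satisfies q-growth with constant κ > 0 on {y : F(y) ≤ F(x₀)}, i.e. F(y) − F* ≥ (κ/q)‖y − ȳ‖^q for all such y (ȳ the Euclidean projection of y onto X*), and suppose there is R > 0 with ‖x − x*‖ ≤ R for every x with F_γ(x) ≤ F_γ(x₀) and every x* ∈ X*. Then for every x with F_γ(x) ≤ F_γ(x₀): F_γ(x) − F* ≥ κ²γ(1 − γL)/(2(κγ + (1 − γL)R^{2−q})²) · ‖x − x̄‖², where x̄ is the Euclidean projection of x onto X* and F_γ is the Forward–Backward envelope. -/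
/-! Let `z` minimize the forward–backward model at `x` (it exists: by the descent lemma the model
dominates `F* + (1 − γL)/(2γ)‖· − x‖²`, so it is coercive), so that `F_γ(x)` is the model value
at `z`. Again by the descent lemma, `F(z) + (1 − γL)/(2γ)‖z − x‖² ≤ F_γ(x) ≤ F_γ(x₀) ≤ F(x₀)`,
so `z` lies in both sublevel sets and `F(z) − F* ≥ (κ/q)‖z − z̄‖^q ≥ κ/(2R^{2−q})‖z − z̄‖²`,
using `‖z − z̄‖ ≤ R`. As `‖x − x̄‖ ≤ ‖x − z̄‖ ≤ ‖z − x‖ + ‖z − z̄‖`, the inequality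
`αβ/(α+β)(a + b)² ≤ αa² + βb²` turns the sum of the two quadratic terms into a bound on
`‖x − x̄‖²`. -/

noncomputable section
open scoped RealInnerProductSpace

theorem LowerSemicontinuous.isClosed_setOf_eq_of_forall_le {X β : Type*} [TopologicalSpace X]
    [LinearOrder β] {g : X → β} {c : β} (hg : LowerSemicontinuous g) (hc : ∀ y, c ≤ g y) :
    IsClosed {y | g y = c} := by
  convert hg.isClosed_preimage c using 1
  ext y
  exact ⟨le_of_eq, fun h => le_antisymm h (hc y)⟩

theorem LowerSemicontinuous.exists_forall_le_of_isCompact_sublevel {X β : Type*}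
    [TopologicalSpace X] [LinearOrder β] {g : X → β} (hg : LowerSemicontinuous g) {w : X}
    (hK : IsCompact {u | g u ≤ g w}) : ∃ z, ∀ u, g z ≤ g u := by
  obtain ⟨z, hzK, hzmin⟩ := (hg.lowerSemicontinuousOn _).exists_isMinOn ⟨w, le_refl (g w)⟩ hK
  refine ⟨z, fun u => ?_⟩
  by_cases hu : g u ≤ g w
  · exact hzmin hu
  · exact hzK.trans (not_le.1 hu).le

theorem isBounded_setOf_le_of_coe_add_mul_dist_sq_le {X : Type*} [PseudoMetricSpace X]
    {g : X → EReal} {c α : ℝ} {x : X} (hα : 0 < α)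
    (hlow : ∀ u, ((c + α * dist u x ^ 2 : ℝ) : EReal) ≤ g u) (t : ℝ) :
    Bornology.IsBounded {u | g u ≤ t} := by
  refine (Metric.isBounded_closedBall (x := x) (r := max 1 ((t - c) / α))).subset fun u hu => ?_
  have hsq : α * dist u x ^ 2 ≤ t - c := by
    have := EReal.coe_le_coe_iff.1 ((hlow u).trans hu)
    linarith
  rw [Metric.mem_closedBall, le_max_iff, le_div_iff₀ hα]
  by_cases h1 : dist u x ≤ 1
  · exact Or.inl h1
  · have hd : dist u x ≤ dist u x ^ 2 := by nlinarith
    exact Or.inr (by nlinarith [mul_le_mul_of_nonneg_left hd hα.le])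

theorem LowerSemicontinuous.exists_forall_le_of_coe_add_mul_dist_sq_le {X : Type*}
    [PseudoMetricSpace X] [ProperSpace X] {g : X → EReal} {c α : ℝ} {x : X}
    (hg : LowerSemicontinuous g) (hα : 0 < α)
    (hlow : ∀ u, ((c + α * dist u x ^ 2 : ℝ) : EReal) ≤ g u) : ∃ z, ∀ u, g z ≤ g u := by
  by_cases htop : ∀ u, g u = ⊤
  · exact ⟨x, fun u => by rw [htop x, htop u]⟩
  obtain ⟨w, hw⟩ := not_forall.1 htop
  obtain ⟨t, hwt, -⟩ := EReal.exists_between_coe_real (lt_top_iff_ne_top.2 hw)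
  refine hg.exists_forall_le_of_isCompact_sublevel (w := w) ?_
  refine Metric.isCompact_of_isClosed_isBounded (hg.isClosed_preimage (g w)) ?_
  exact (isBounded_setOf_le_of_coe_add_mul_dist_sq_le hα hlow t).subset
    fun u hu => le_trans hu hwt.le

theorem LowerSemicontinuous.coe_add {X : Type*} [TopologicalSpace X] {g : X → ℝ}
    {ψ : X → EReal} (hg : Continuous g) (hψ : LowerSemicontinuous ψ) :
    LowerSemicontinuous fun u => (g u : EReal) + ψ u :=
  (continuous_coe_real_ereal.comp hg).lowerSemicontinuous.add' hψ fun _ =>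
    EReal.continuousAt_add (Or.inl (EReal.coe_ne_top _)) (Or.inl (EReal.coe_ne_bot _))

theorem IsClosed.exists_forall_norm_sub_le {F : Type*} [NormedAddCommGroup F] [ProperSpace F]
    {s : Set F} (hs : IsClosed s) (hne : s.Nonempty) (x : F) :
    ∃ y ∈ s, ∀ z ∈ s, ‖x - y‖ ≤ ‖x - z‖ := by
  obtain ⟨y, hy, hdist⟩ := hs.exists_infDist_eq_dist hne x
  refine ⟨y, hy, fun z hz => ?_⟩
  simpa only [← dist_eq_norm, ← hdist] using Metric.infDist_le_dist_of_mem hz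

theorem sq_le_rpow_mul_rpow_two_sub {b R q : ℝ} (hb : 0 ≤ b) (hbR : b ≤ R) (hq : q ≤ 2) :
    b ^ 2 ≤ b ^ q * R ^ (2 - q) := by
  calc b ^ 2 = b ^ q * b ^ (2 - q) := by
        rw [← Real.rpow_add' hb (by norm_num), add_sub_cancel, Real.rpow_two]
    _ ≤ b ^ q * R ^ (2 - q) :=
        mul_le_mul_of_nonneg_left (Real.rpow_le_rpow hb hbR (by linarith)) (Real.rpow_nonneg hb q)

theorem mul_div_add_mul_add_sq_le {α β : ℝ} (hα : 0 < α) (hβ : 0 < β) (a b : ℝ) :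
    α * β / (α + β) * (a + b) ^ 2 ≤ α * a ^ 2 + β * b ^ 2 := by
  rw [div_mul_eq_mul_div, div_le_iff₀ (by positivity)]
  nlinarith [sq_nonneg (α * a - β * b)]

theorem growth_constant_mul_sq_le {κ γ L q R a b d : ℝ} (hκ : 0 < κ) (hγ : 0 < γ)
    (hγL : γ * L < 1) (hq : 0 < q) (hq2 : q ≤ 2) (hR : 0 < R) (hb : 0 ≤ b)
    (hbR : b ≤ R) (hd0 : 0 ≤ d) (hd : d ≤ a + b) :
    κ ^ 2 * γ * (1 - γ * L) / (2 * (κ * γ + (1 - γ * L) * R ^ (2 - q)) ^ 2) * d ^ 2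
      ≤ κ / q * b ^ q + (1 - γ * L) / (2 * γ) * a ^ 2 := by
  set S := R ^ (2 - q)
  set D := κ * γ + (1 - γ * L) * S
  set α := (1 - γ * L) / (2 * γ)
  set β := κ / (2 * S)
  have hu : 0 < 1 - γ * L := by linarith
  have hS : 0 < S := Real.rpow_pos_of_pos hR _
  have hD : κ * γ < D := by simp only [D]; nlinarith [mul_pos hu hS]
  have hα : 0 < α := by positivity
  have hβ : 0 < β := by positivity
  have hb_quad : β * b ^ 2 ≤ κ / q * b ^ q := calc
    β * b ^ 2 ≤ β * (b ^ q * S) :=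
        mul_le_mul_of_nonneg_left (sq_le_rpow_mul_rpow_two_sub hb hbR hq2) hβ.le
    _ = κ / 2 * b ^ q := by simp only [β]; field_simp
    _ ≤ κ / q * b ^ q := mul_le_mul_of_nonneg_right
        (div_le_div_of_nonneg_left hκ.le hq hq2) (Real.rpow_nonneg hb q)
  have hharmonic : α * β / (α + β) = κ * (1 - γ * L) / (2 * D) := by
    simp only [α, β, D]; field_simp; ring
  have hconst : κ ^ 2 * γ * (1 - γ * L) / (2 * D ^ 2) ≤ α * β / (α + β) := by
    rw [hharmonic, div_le_div_iff₀ (by positivity) (by positivity)]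
    nlinarith [mul_pos (mul_pos hκ hu) (sub_pos.2 hD), mul_pos hκ hγ]
  calc κ ^ 2 * γ * (1 - γ * L) / (2 * D ^ 2) * d ^ 2
      ≤ α * β / (α + β) * (a + b) ^ 2 :=
        mul_le_mul hconst (pow_le_pow_left₀ hd0 hd 2) (sq_nonneg d) (by positivity)
    _ ≤ α * a ^ 2 + β * b ^ 2 := mul_div_add_mul_add_sq_le hα hβ a b
    _ ≤ κ / q * b ^ q + α * a ^ 2 := by linarith

section ForwardBackward

variable {E : Type*} [NormedAddCommGroup E] [InnerProductSpace ℝ E] [CompleteSpace E]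
  {f : E → ℝ} {ψ : E → EReal} {γ L : ℝ}

theorem le_add_inner_gradient_add_sq_of_lipschitz_gradient
    (hf : Differentiable ℝ f) (hlip : ∀ x y, ‖gradient f x - gradient f y‖ ≤ L * ‖x - y‖)
    (x u : E) : f u ≤ f x + ⟪gradient f x, u - x⟫ + L / 2 * ‖u - x‖ ^ 2 := by
  set v := u - x
  have hline (t : ℝ) :
      HasDerivAt (fun s : ℝ => f (x + s • v)) ⟪gradient f (x + t • v), v⟫ t := by
    have hpath : HasDerivAt (fun s : ℝ => x + s • v) v t := by
      simpa using ((hasDerivAt_id t).smul_const v).const_add x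
    rw [gradient, InnerProductSpace.toDual_symm_apply]
    exact (hf _).hasFDerivAt.comp_hasDerivAt t hpath
  have hslope (t : ℝ) (ht : 0 ≤ t) :
      ⟪gradient f (x + t • v), v⟫ ≤ ⟪gradient f x, v⟫ + L * t * ‖v‖ ^ 2 := by
    have hgrad : ‖gradient f (x + t • v) - gradient f x‖ ≤ L * (t * ‖v‖) := by
      simpa [norm_smul, abs_of_nonneg ht] using hlip (x + t • v) x
    have hcs := real_inner_le_norm (gradient f (x + t • v) - gradient f x) v
    rw [inner_sub_left] at hcs
    nlinarith [norm_nonneg v]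
  have hquad (t : ℝ) :
      HasDerivAt (fun s : ℝ => f x + s * ⟪gradient f x, v⟫ + L / 2 * s ^ 2 * ‖v‖ ^ 2)
        (⟪gradient f x, v⟫ + L * t * ‖v‖ ^ 2) t := by
    have hlin : HasDerivAt (fun s : ℝ => s * ⟪gradient f x, v⟫) ⟪gradient f x, v⟫ t := by
      simpa using (hasDerivAt_id t).mul_const ⟪gradient f x, v⟫
    have hsq : HasDerivAt (fun s : ℝ => L / 2 * s ^ 2 * ‖v‖ ^ 2) (L * t * ‖v‖ ^ 2) t :=
      (((hasDerivAt_pow 2 t).const_mul (L / 2)).mul_const (‖v‖ ^ 2)).congr_deriv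
        (by push_cast; ring)
    exact (hlin.const_add (f x)).add hsq
  have hcompare := image_le_of_deriv_right_le_deriv_boundary (a := 0) (b := 1)
    (fun t _ => (hline t).continuousAt.continuousWithinAt) (fun t _ => (hline t).hasDerivWithinAt)
    (by simp) (fun t _ => (hquad t).continuousAt.continuousWithinAt)
    (fun t _ => (hquad t).hasDerivWithinAt) (fun t ht => hslope t ht.1)
    (Set.right_mem_Icc.2 zero_le_one)
  simpa [v] using hcompare

def forwardBackwardModel (f : E → ℝ) (ψ : E → EReal) (γ : ℝ) (x u : E) : EReal :=
  ((f x + ⟪gradient f x, u - x⟫ + 1 / (2 * γ) * ‖u - x‖ ^ 2 : ℝ) : EReal) + ψ u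

theorem iInf_forwardBackwardModel_le (f : E → ℝ) (ψ : E → EReal) (γ : ℝ) (x : E) :
    ⨅ u, forwardBackwardModel f ψ γ x u ≤ f x + ψ x :=
  (iInf_le _ x).trans_eq (by simp [forwardBackwardModel])

theorem add_sq_le_forwardBackwardModel (hf : Differentiable ℝ f)
    (hlip : ∀ x y, ‖gradient f x - gradient f y‖ ≤ L * ‖x - y‖) (hγ : γ ≠ 0) (x u : E) :
    (f u : EReal) + ψ u + ((1 - γ * L) / (2 * γ) * ‖u - x‖ ^ 2 : ℝ)
      ≤ forwardBackwardModel f ψ γ x u := by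
  have hquad : f u + (1 - γ * L) / (2 * γ) * ‖u - x‖ ^ 2
      ≤ f x + ⟪gradient f x, u - x⟫ + 1 / (2 * γ) * ‖u - x‖ ^ 2 := by
    have hcoeff : (1 - γ * L) / (2 * γ) = 1 / (2 * γ) - L / 2 := by field_simp
    rw [hcoeff]
    linarith [le_add_inner_gradient_add_sq_of_lipschitz_gradient hf hlip x u]
  calc (f u : EReal) + ψ u + ((1 - γ * L) / (2 * γ) * ‖u - x‖ ^ 2 : ℝ)
      = ((f u + (1 - γ * L) / (2 * γ) * ‖u - x‖ ^ 2 : ℝ) : EReal) + ψ u := by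
        rw [EReal.coe_add, add_right_comm]
    _ ≤ forwardBackwardModel f ψ γ x u := add_le_add_left (EReal.coe_le_coe_iff.2 hquad) _

theorem exists_add_sq_le_iInf_forwardBackwardModel [ProperSpace E] (hf : Differentiable ℝ f)
    (hlip : ∀ x y, ‖gradient f x - gradient f y‖ ≤ L * ‖x - y‖) (hψ : LowerSemicontinuous ψ)
    {c : ℝ} (hc : ∀ y, (c : EReal) ≤ f y + ψ y) (hγ : 0 < γ) (hγL : γ * L < 1) (x : E) :
    ∃ z, (f z : EReal) + ψ z + ((1 - γ * L) / (2 * γ) * ‖z - x‖ ^ 2 : ℝ)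
      ≤ ⨅ u, forwardBackwardModel f ψ γ x u := by
  have hmodel := add_sq_le_forwardBackwardModel (ψ := ψ) hf hlip hγ.ne' x
  have hlsc : LowerSemicontinuous (forwardBackwardModel f ψ γ x) :=
    LowerSemicontinuous.coe_add (by fun_prop) hψ
  have hα : 0 < (1 - γ * L) / (2 * γ) := div_pos (by linarith) (by positivity)
  obtain ⟨z, hz⟩ := hlsc.exists_forall_le_of_coe_add_mul_dist_sq_le hα fun u => by
    rw [dist_eq_norm, EReal.coe_add]
    exact (add_le_add_left (hc u) _).trans (hmodel u)
  exact ⟨z, (hmodel z).trans (le_iInf hz)⟩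

end ForwardBackward

theorem forward_backward_envelope_q_growth_general (n : ℕ)
    (ψ : EuclideanSpace ℝ (Fin n) → EReal)
    (hψclosed : LowerSemicontinuous ψ)
    (f : EuclideanSpace ℝ (Fin n) → ℝ) (L : ℝ) (hL : 0 < L)
    (hf : Differentiable ℝ f)
    (hlip : ∀ x y, ‖gradient f x - gradient f y‖ ≤ L * ‖x - y‖)
    (F : EuclideanSpace ℝ (Fin n) → EReal)
    (hF : ∀ x, F x = (f x : EReal) + ψ x)
    (Fs : ℝ) (Xs : Set (EuclideanSpace ℝ (Fin n)))
    (hXs : Xs = {y | F y = (Fs : EReal)})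
    (hmin : ∀ y, (Fs : EReal) ≤ F y)
    (q γ : ℝ) (hq1 : 1 ≤ q) (hq2 : q < 2) (hγL0 : 0 < γ * L) (hγL1 : γ * L < 1)
    (Fγ : EuclideanSpace ℝ (Fin n) → EReal)
    (hFγ : ∀ x, Fγ x = ⨅ u,
      ((f x + ⟪gradient f x, u - x⟫ + 1 / (2 * γ) * ‖u - x‖ ^ 2 : ℝ) : EReal) + ψ u)
    (x₀ : EuclideanSpace ℝ (Fin n)) (κ : ℝ) (hκ : 0 < κ)
    (hgrowth : ∀ y, F y ≤ F x₀ → ∀ ybar ∈ Xs, (∀ z ∈ Xs, ‖y - ybar‖ ≤ ‖y - z‖) →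
      ((Fs + κ / q * ‖y - ybar‖ ^ q : ℝ) : EReal) ≤ F y)
    (R : ℝ) (hR : 0 < R)
    (hbound : ∀ x, Fγ x ≤ Fγ x₀ → ∀ xs ∈ Xs, ‖x - xs‖ ≤ R) :
    ∀ x, Fγ x ≤ Fγ x₀ → ∀ xbar ∈ Xs, (∀ z ∈ Xs, ‖x - xbar‖ ≤ ‖x - z‖) →
      ((Fs + κ ^ 2 * γ * (1 - γ * L) / (2 * (κ * γ + (1 - γ * L) * R ^ (2 - q)) ^ 2)
          * ‖x - xbar‖ ^ 2 : ℝ) : EReal) ≤ Fγ x := by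
  obtain rfl : F = fun y => (f y : EReal) + ψ y := funext hF
  obtain rfl : Fγ = fun x => ⨅ u, forwardBackwardModel f ψ γ x u := funext hFγ
  intro x hx xbar hxbar hxproj
  have hγ : 0 < γ := pos_of_mul_pos_left hγL0 hL.le
  obtain ⟨z, hz⟩ := exists_add_sq_le_iInf_forwardBackwardModel hf hlip hψclosed hmin hγ hγL1 x
  have hzx : (f z : EReal) + ψ z ≤ ⨅ u, forwardBackwardModel f ψ γ x u :=
    le_trans (le_add_of_nonneg_right (EReal.coe_nonneg.2 (by positivity))) hz
  have hzF : (f z : EReal) + ψ z ≤ f x₀ + ψ x₀ :=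
    hzx.trans (hx.trans (iInf_forwardBackwardModel_le f ψ γ x₀))
  have hzFγ := (iInf_forwardBackwardModel_le f ψ γ z).trans (hzx.trans hx)
  have hXs_closed : IsClosed Xs :=
    hXs ▸ (LowerSemicontinuous.coe_add hf.continuous hψclosed).isClosed_setOf_eq_of_forall_le hmin
  obtain ⟨zbar, hzbar, hzproj⟩ := hXs_closed.exists_forall_norm_sub_le ⟨xbar, hxbar⟩ z
  have htri : ‖x - xbar‖ ≤ ‖z - x‖ + ‖z - zbar‖ := calc
    ‖x - xbar‖ ≤ ‖x - zbar‖ := hxproj zbar hzbar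
    _ ≤ ‖x - z‖ + ‖z - zbar‖ := norm_sub_le_norm_sub_add_norm_sub _ _ _
    _ = ‖z - x‖ + ‖z - zbar‖ := by rw [norm_sub_rev]
  have hconst := growth_constant_mul_sq_le hκ hγ hγL1 (by linarith) hq2.le hR (norm_nonneg _)
    (hbound z hzFγ zbar hzbar) (norm_nonneg _) htri
  calc ((Fs + κ ^ 2 * γ * (1 - γ * L) / (2 * (κ * γ + (1 - γ * L) * R ^ (2 - q)) ^ 2)
          * ‖x - xbar‖ ^ 2 : ℝ) : EReal)
      ≤ ((Fs + κ / q * ‖z - zbar‖ ^ q : ℝ) : EReal)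
          + ((1 - γ * L) / (2 * γ) * ‖z - x‖ ^ 2 : ℝ) := by
        rw [← EReal.coe_add, EReal.coe_le_coe_iff]
        linarith
    _ ≤ (f z : EReal) + ψ z + ((1 - γ * L) / (2 * γ) * ‖z - x‖ ^ 2 : ℝ) :=
        add_le_add_left (hgrowth z hzF zbar hzbar hzproj) _
    _ ≤ ⨅ u, forwardBackwardModel f ψ γ x u := hz

/-- let `ψ : ℝⁿ → ℝ ∪ {+∞}` (modeled as an `EReal`-valued function never
taking `⊥`) be proper closed convex and `f : ℝⁿ → ℝ` differentiable with `L`-Lipschitz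
gradient (`L > 0`); set `F = f + ψ`, with nonempty minimizer set `X*` and (real) minimal
value `F*`, let `q ∈ [1,2)` and let `γ` satisfy `γL ∈ (0,1)`.  Let `F_γ` be the
Forward–Backward envelope.  Fix `x₀`, suppose `F` satisfies `q`-growth with constant
`κ > 0` on `{y : F(y) ≤ F(x₀)}` (where `ybar` denotes the Euclidean projection of `y`
onto `X*`), and suppose there is `R > 0` with `‖x − x*‖ ≤ R` for every `x` with
`F_γ(x) ≤ F_γ(x₀)` and every `x* ∈ X*`.  Then for every `x` with `F_γ(x) ≤ F_γ(x₀)`: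
`F_γ(x) − F* ≥ κ²γ(1 − γL)/(2(κγ + (1 − γL)R^{2−q})²) · ‖x − xbar‖²`. -/
theorem forward_backward_envelope_q_growth (n : ℕ)
    (ψ : EuclideanSpace ℝ (Fin n) → EReal)
    (hψbot : ∀ x, ψ x ≠ ⊥) (hψproper : ∃ x, ψ x ≠ ⊤)
    (hψclosed : LowerSemicontinuous ψ)
    (hψconvex : ∀ (u v : EuclideanSpace ℝ (Fin n)) (a c : ℝ), 0 ≤ a → 0 ≤ c → a + c = 1 →
      ψ (a • u + c • v) ≤ (a : EReal) * ψ u + (c : EReal) * ψ v)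
    (f : EuclideanSpace ℝ (Fin n) → ℝ) (L : ℝ) (hL : 0 < L)
    (hf : Differentiable ℝ f)
    (hlip : ∀ x y, ‖gradient f x - gradient f y‖ ≤ L * ‖x - y‖)
    (F : EuclideanSpace ℝ (Fin n) → EReal)
    (hF : ∀ x, F x = (f x : EReal) + ψ x)
    (Fs : ℝ) (Xs : Set (EuclideanSpace ℝ (Fin n)))
    (hXsne : Xs.Nonempty) (hXs : Xs = {y | F y = (Fs : EReal)})
    (hmin : ∀ y, (Fs : EReal) ≤ F y)
    (q γ : ℝ) (hq1 : 1 ≤ q) (hq2 : q < 2) (hγL0 : 0 < γ * L) (hγL1 : γ * L < 1)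
    (Fγ : EuclideanSpace ℝ (Fin n) → EReal)
    (hFγ : ∀ x, Fγ x = ⨅ u,
      ((f x + ⟪gradient f x, u - x⟫ + 1 / (2 * γ) * ‖u - x‖ ^ 2 : ℝ) : EReal) + ψ u)
    (x₀ : EuclideanSpace ℝ (Fin n)) (κ : ℝ) (hκ : 0 < κ)
    (hgrowth : ∀ y, F y ≤ F x₀ → ∀ ybar ∈ Xs, (∀ z ∈ Xs, ‖y - ybar‖ ≤ ‖y - z‖) →
      ((Fs + κ / q * ‖y - ybar‖ ^ q : ℝ) : EReal) ≤ F y)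
    (R : ℝ) (hR : 0 < R)
    (hbound : ∀ x, Fγ x ≤ Fγ x₀ → ∀ xs ∈ Xs, ‖x - xs‖ ≤ R) :
    ∀ x, Fγ x ≤ Fγ x₀ → ∀ xbar ∈ Xs, (∀ z ∈ Xs, ‖x - xbar‖ ≤ ‖x - z‖) →
      ((Fs + κ ^ 2 * γ * (1 - γ * L) / (2 * (κ * γ + (1 - γ * L) * R ^ (2 - q)) ^ 2)
          * ‖x - xbar‖ ^ 2 : ℝ) : EReal) ≤ Fγ x :=
  forward_backward_envelope_q_growth_general n ψ hψclosed f L hL hf hlip F hF Fs Xs hXs hmin q γ hq1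
    hq2 hγL0 hγL1 Fγ hFγ x₀ κ hκ hgrowth R hR hbound
end
end

section
/- Let F_γ : ℝⁿ → ℝ be convex and differentiable with block coordinate-wise Lipschitz gradient with constants Lᵢ > 0, let X* ⊆ ℝⁿ be nonempty closed convex and F* ∈ ℝ with F_γ(x*) ≤ F* for every x* ∈ X*, and suppose F_γ(x) − F* ≥ (κ̄/2)‖x − x̄‖₁² for all x ∈ ℝⁿ with some κ̄ > 0, where x̄ is the ‖·‖₁-projection of x onto X*. Fix x₀ ∈ ℝⁿ and, for each index word ω = (ω₀,…,ω_{k−1}) ∈ {1,…,N}^k, define iterates by x₀(ω) = x₀ and x_{j+1}(ω) = x_j(ω) − (1/L_{ω_j}) U_{ω_j} U_{ω_j}ᵀ∇F_γ(x_j(ω)). Then for every k ≥ 0: N^{−k} ∑_{ω∈{1,…,N}^k} [ (1/2)‖x_k(ω) − x_k(ω)‾‖₁² + F_γ(x_k(ω)) − F* ] ≤ (1 − κ̄/(N(1+κ̄)))^k · [ (1/2)‖x₀ − x̄₀‖₁² + F_γ(x₀) − F* ], where y‾ denotes the ‖·‖₁-projection of y onto X*. -/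
noncomputable section
open scoped RealInnerProductSpace

/-- `blockProj b i x` models `Uᵢ Uᵢᵀ x`: the vector of `ℝⁿ` keeping the coordinates of block
`i` (as given by the block assignment `b : Fin n → Fin N`) and zeroing the others. -/
def blockProj {n N : ℕ} (b : Fin n → Fin N) (i : Fin N) (x : EuclideanSpace ℝ (Fin n)) :
    EuclideanSpace ℝ (Fin n) :=
  (EuclideanSpace.equiv (Fin n) ℝ).symm (fun j => if b j = i then x j else 0)

/-- The squared weighted norm `‖x‖₁² = ∑ᵢ Lᵢ ‖Uᵢᵀ x‖²`. -/
def wnormSq {n N : ℕ} (b : Fin n → Fin N) (L : Fin N → ℝ)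
    (x : EuclideanSpace ℝ (Fin n)) : ℝ :=
  ∑ i : Fin N, L i * ‖blockProj b i x‖ ^ 2

/-- The weighted norm `‖x‖₁ = (∑ᵢ Lᵢ ‖Uᵢᵀ x‖²)^{1/2}`. -/
def wnorm {n N : ℕ} (b : Fin n → Fin N) (L : Fin N → ℝ)
    (x : EuclideanSpace ℝ (Fin n)) : ℝ :=
  Real.sqrt (wnormSq b L x)

/-- The coordinate gradient step `Tᵢ x = x − (1/Lᵢ) Uᵢ Uᵢᵀ ∇F_γ(x)`. -/
def coordStep {n N : ℕ} (b : Fin n → Fin N) (L : Fin N → ℝ)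
    (Fγ : EuclideanSpace ℝ (Fin n) → ℝ) (i : Fin N) (x : EuclideanSpace ℝ (Fin n)) :
    EuclideanSpace ℝ (Fin n) :=
  x - (1 / L i) • blockProj b i (gradient Fγ x)

/-- Deterministic trajectory of a coordinate method: `traj step x₀ k ω` is the iterate
`x_k(ω)` obtained from `x₀` by applying `step ω₀, step ω₁, …, step ω_{k−1}` in order. -/
def traj {n N : ℕ} (step : Fin N → EuclideanSpace ℝ (Fin n) → EuclideanSpace ℝ (Fin n))
    (x₀ : EuclideanSpace ℝ (Fin n)) : ∀ k : ℕ, (Fin k → Fin N) → EuclideanSpace ℝ (Fin n)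
  | 0, _ => x₀
  | (k + 1), ω => step (ω (Fin.last k)) (traj step x₀ k (fun j => ω j.castSucc))

/-!
Let `Φ(x) = ½‖x − x̄‖₁² + F(x) − F*`. A step along block `i` lowers `F` by at least
`‖∇ᵢF(x)‖²/(2Lᵢ)` (descent lemma along the block), and changes `‖x − x̄‖₁²` by exactly
`−2⟪x − x̄, ∇ᵢF(x)⟫ + ‖∇ᵢF(x)‖²/Lᵢ`; since the new point is at least as close to its own
projection as to `x̄`, `Φ` drops by at least `⟪x − x̄, ∇ᵢF(x)⟫`. Summing over the `N` blocks
recovers the full inner product `⟪x − x̄, ∇F(x)⟫ ≥ F(x) − F*` (convexity), and the growth condition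
gives `F(x) − F* ≥ κ̄/(1 + κ̄) · Φ(x)`. Hence `∑ᵢ Φ(Tᵢ x) ≤ (N − κ̄/(1 + κ̄)) Φ(x)`, which iterates
along the index words.
-/

section Calculus

variable {E : Type*} [NormedAddCommGroup E] [InnerProductSpace ℝ E] [CompleteSpace E]
  {F : E → ℝ}

theorem DifferentiableAt.hasDerivAt_comp_add_smul {x h : E} {t : ℝ}
    (hF : DifferentiableAt ℝ F (x + t • h)) :
    HasDerivAt (fun s : ℝ => F (x + s • h)) ⟪gradient F (x + t • h), h⟫ t := by
  have hline : HasDerivAt (fun s : ℝ => x + s • h) h t := by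
    simpa using ((hasDerivAt_id t).smul_const h).const_add x
  exact (hasGradientAt_iff_hasFDerivAt.mp hF.hasGradientAt).comp_hasDerivAt t hline

theorem ConvexOn.inner_gradient_sub_le (hF : ConvexOn ℝ Set.univ F) {x : E}
    (hFx : DifferentiableAt ℝ F x) (y : E) :
    ⟪gradient F x, y - x⟫ ≤ F y - F x := by
  have hline : ConvexOn ℝ Set.univ (fun s : ℝ => F (x + s • (y - x))) := by
    simpa [Function.comp_def, AffineMap.lineMap_apply_module', add_comm]
      using hF.comp_affineMap (AffineMap.lineMap x y)
  have hderiv := (zero_smul ℝ (y - x) ▸ add_zero x ▸ hFx).hasDerivAt_comp_add_smul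
  simpa [slope_def_field] using hline.le_slope_of_hasDerivWithinAt (Set.mem_univ 0)
    (Set.mem_univ 1) one_pos hderiv.hasDerivWithinAt

theorem image_add_le_of_inner_gradient_sub_le (hF : Differentiable ℝ F) {x h : E} {M : ℝ}
    (hM : ∀ t ∈ Set.Icc (0 : ℝ) 1, ⟪gradient F (x + t • h) - gradient F x, h⟫ ≤ t * M) :
    F (x + h) ≤ F x + ⟪gradient F x, h⟫ + M / 2 := by
  have hf (t : ℝ) := (hF (x + t • h)).hasDerivAt_comp_add_smul
  have hB (t : ℝ) : HasDerivAt (fun s : ℝ => F x + s * ⟪gradient F x, h⟫ + M / 2 * s ^ 2)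
      (⟪gradient F x, h⟫ + t * M) t := by
    refine ((((hasDerivAt_id' t).mul_const _).const_add (F x)).fun_add
      ((hasDerivAt_pow 2 t).const_mul (M / 2))).congr_deriv ?_
    simp
    ring
  have key := image_le_of_deriv_right_le_deriv_boundary (a := 0) (b := 1)
    (f := fun s : ℝ => F (x + s • h))
    (B := fun s : ℝ => F x + s * ⟪gradient F x, h⟫ + M / 2 * s ^ 2)
    (fun t _ => (hf t).continuousAt.continuousWithinAt) (fun t _ => (hf t).hasDerivWithinAt)
    (by simp) (fun t _ => (hB t).continuousAt.continuousWithinAt)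
    (fun t _ => (hB t).hasDerivWithinAt)
    (fun t ht => by
      have := hM t (Set.Ico_subset_Icc_self ht)
      rw [inner_sub_left] at this
      linarith)
  simpa using key (Set.right_mem_Icc.2 zero_le_one)

end Calculus

section BlockProj

variable {n N : ℕ} {b : Fin n → Fin N}

theorem blockProj_apply (i : Fin N) (x : EuclideanSpace ℝ (Fin n)) (j : Fin n) :
    blockProj b i x j = if b j = i then x j else 0 := rfl

theorem blockProj_add (i : Fin N) (x y : EuclideanSpace ℝ (Fin n)) :
    blockProj b i (x + y) = blockProj b i x + blockProj b i y := by
  ext j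
  simp only [blockProj_apply, PiLp.add_apply]
  split_ifs <;> simp

theorem blockProj_smul (i : Fin N) (c : ℝ) (x : EuclideanSpace ℝ (Fin n)) :
    blockProj b i (c • x) = c • blockProj b i x := by
  ext j
  simp only [blockProj_apply, PiLp.smul_apply, smul_eq_mul]
  split_ifs <;> simp

theorem blockProj_blockProj_self (i : Fin N) (x : EuclideanSpace ℝ (Fin n)) :
    blockProj b i (blockProj b i x) = blockProj b i x := by
  ext j
  simp only [blockProj_apply]
  split_ifs <;> rfl

theorem blockProj_blockProj_of_ne {i j : Fin N} (hij : j ≠ i) (x : EuclideanSpace ℝ (Fin n)) :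
    blockProj b j (blockProj b i x) = 0 := by
  ext m
  simp only [blockProj_apply, PiLp.zero_apply]
  split_ifs <;> simp_all

theorem sum_blockProj (x : EuclideanSpace ℝ (Fin n)) : ∑ i, blockProj b i x = x := by
  ext j
  simp [blockProj_apply]

theorem inner_blockProj_left (i : Fin N) (x y : EuclideanSpace ℝ (Fin n)) :
    ⟪blockProj b i x, y⟫ = ⟪x, blockProj b i y⟫ := by
  simp only [PiLp.inner_apply, blockProj_apply]
  refine Finset.sum_congr rfl fun j _ => ?_
  split_ifs <;> simp

theorem inner_blockProj_self (i : Fin N) (x : EuclideanSpace ℝ (Fin n)) :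
    ⟪x, blockProj b i x⟫ = ‖blockProj b i x‖ ^ 2 := by
  rw [← real_inner_self_eq_norm_sq, inner_blockProj_left, blockProj_blockProj_self]

end BlockProj

section WeightedNorm

variable {n N : ℕ} {b : Fin n → Fin N} {L : Fin N → ℝ}

theorem wnormSq_nonneg (hL : ∀ i, 0 ≤ L i) (x : EuclideanSpace ℝ (Fin n)) :
    0 ≤ wnormSq b L x :=
  Finset.sum_nonneg fun i _ => mul_nonneg (hL i) (sq_nonneg _)

theorem wnorm_le_wnorm_iff (hL : ∀ i, 0 ≤ L i) {x y : EuclideanSpace ℝ (Fin n)} :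
    wnorm b L x ≤ wnorm b L y ↔ wnormSq b L x ≤ wnormSq b L y :=
  Real.sqrt_le_sqrt_iff (wnormSq_nonneg hL y)

theorem wnormSq_add_smul_blockProj (z v : EuclideanSpace ℝ (Fin n)) (i : Fin N) (c : ℝ) :
    wnormSq b L (z + c • blockProj b i v)
      = wnormSq b L z + 2 * c * L i * ⟪z, blockProj b i v⟫
        + c ^ 2 * L i * ‖blockProj b i v‖ ^ 2 := by
  have hterm (j : Fin N) : L j * ‖blockProj b j (z + c • blockProj b i v)‖ ^ 2
      = L j * ‖blockProj b j z‖ ^ 2 + if j = i then 2 * c * L i * ⟪z, blockProj b i v⟫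
          + c ^ 2 * L i * ‖blockProj b i v‖ ^ 2 else 0 := by
    rw [blockProj_add, blockProj_smul]
    by_cases hj : j = i
    · subst hj
      rw [if_pos rfl, blockProj_blockProj_self, norm_add_sq_real, inner_smul_right,
        inner_blockProj_left, blockProj_blockProj_self, norm_smul, mul_pow, Real.norm_eq_abs,
        sq_abs]
      ring
    · rw [blockProj_blockProj_of_ne hj, smul_zero, add_zero, if_neg hj, add_zero]
  simp only [wnormSq, hterm, Finset.sum_add_distrib, Finset.sum_ite_eq', Finset.mem_univ,
    if_true, add_assoc]

end WeightedNorm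

section Trajectory

variable {n N : ℕ} (step : Fin N → EuclideanSpace ℝ (Fin n) → EuclideanSpace ℝ (Fin n))
  (x₀ : EuclideanSpace ℝ (Fin n))

theorem sum_traj_succ {M : Type*} [AddCommMonoid M] (f : EuclideanSpace ℝ (Fin n) → M) (k : ℕ) :
    ∑ ω : Fin (k + 1) → Fin N, f (traj step x₀ (k + 1) ω)
      = ∑ σ : Fin k → Fin N, ∑ i, f (step i (traj step x₀ k σ)) := by
  rw [← (Fin.snocEquiv fun _ => Fin N).sum_comp, Fintype.sum_prod_type, Finset.sum_comm]
  simp [traj]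

theorem sum_traj_le_pow {Φ : EuclideanSpace ℝ (Fin n) → ℝ} {c : ℝ} (hc : 0 ≤ c)
    (hstep : ∀ x, ∑ i, Φ (step i x) ≤ c * Φ x) (k : ℕ) :
    ∑ ω : Fin k → Fin N, Φ (traj step x₀ k ω) ≤ c ^ k * Φ x₀ := by
  induction k with
  | zero => simp [traj]
  | succ k ih =>
    calc ∑ ω : Fin (k + 1) → Fin N, Φ (traj step x₀ (k + 1) ω)
        ≤ ∑ σ : Fin k → Fin N, c * Φ (traj step x₀ k σ) := by
          rw [sum_traj_succ]
          exact Finset.sum_le_sum fun σ _ => hstep _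
      _ ≤ c ^ (k + 1) * Φ x₀ := by
          rw [← Finset.mul_sum, pow_succ', mul_assoc]
          exact mul_le_mul_of_nonneg_left ih hc

end Trajectory

section CoordinateDescent

variable {n N : ℕ} {b : Fin n → Fin N} {L : Fin N → ℝ} {F : EuclideanSpace ℝ (Fin n) → ℝ}

def lyapunov (b : Fin n → Fin N) (L : Fin N → ℝ) (F : EuclideanSpace ℝ (Fin n) → ℝ)
    (proj : EuclideanSpace ℝ (Fin n) → EuclideanSpace ℝ (Fin n)) (Fs : ℝ)
    (x : EuclideanSpace ℝ (Fin n)) : ℝ :=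
  1 / 2 * wnormSq b L (x - proj x) + F x - Fs

theorem image_coordStep_le {i : Fin N} (hLi : 0 < L i) (hF : Differentiable ℝ F)
    (hlip : ∀ x h, blockProj b i h = h →
      ‖blockProj b i (gradient F (x + h) - gradient F x)‖ ≤ L i * ‖h‖)
    (x : EuclideanSpace ℝ (Fin n)) :
    F (coordStep b L F i x) ≤ F x - ‖blockProj b i (gradient F x)‖ ^ 2 / (2 * L i) := by
  set g := blockProj b i (gradient F x)
  set h := -(1 / L i) • g
  have hblock (t : ℝ) : blockProj b i (t • h) = t • h := by
    simp only [h, g, blockProj_smul, blockProj_blockProj_self]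
  have hlip_h (t : ℝ) (ht : 0 ≤ t) :
      ⟪gradient F (x + t • h) - gradient F x, h⟫ ≤ t * (L i * ‖h‖ ^ 2) :=
    calc ⟪gradient F (x + t • h) - gradient F x, h⟫
        = ⟪blockProj b i (gradient F (x + t • h) - gradient F x), h⟫ := by
          rw [inner_blockProj_left, ← one_smul ℝ h, hblock]
      _ ≤ ‖blockProj b i (gradient F (x + t • h) - gradient F x)‖ * ‖h‖ :=
          real_inner_le_norm _ _
      _ ≤ L i * ‖t • h‖ * ‖h‖ := by gcongr; exact hlip _ _ (hblock t)
      _ = t * (L i * ‖h‖ ^ 2) := by rw [norm_smul, Real.norm_of_nonneg ht]; ring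
  have hdesc := image_add_le_of_inner_gradient_sub_le hF fun t ht => hlip_h t ht.1
  have hstep : coordStep b L F i x = x + h := by
    simp only [coordStep, h, g, neg_smul, sub_eq_add_neg]
  have hinner : ⟪gradient F x, h⟫ = -(1 / L i) * ‖g‖ ^ 2 := by
    rw [real_inner_smul_right, inner_blockProj_self]
  have hnorm : ‖h‖ ^ 2 = (1 / L i) ^ 2 * ‖g‖ ^ 2 := by
    rw [norm_smul, mul_pow, Real.norm_eq_abs, sq_abs, neg_sq]
  rw [hstep]
  calc F (x + h) ≤ F x + -(1 / L i) * ‖g‖ ^ 2 + L i * ((1 / L i) ^ 2 * ‖g‖ ^ 2) / 2 := by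
        rwa [hinner, hnorm] at hdesc
    _ = F x - ‖g‖ ^ 2 / (2 * L i) := by field_simp; ring

variable {Xs : Set (EuclideanSpace ℝ (Fin n))} {Fs : ℝ}
  {proj : EuclideanSpace ℝ (Fin n) → EuclideanSpace ℝ (Fin n)}

theorem lyapunov_coordStep_le (hL : ∀ i, 0 < L i) (hF : Differentiable ℝ F) {i : Fin N}
    (hlip : ∀ x h, blockProj b i h = h →
      ‖blockProj b i (gradient F (x + h) - gradient F x)‖ ≤ L i * ‖h‖)
    (hprojmem : ∀ z, proj z ∈ Xs)
    (hproj : ∀ z, ∀ w ∈ Xs, wnorm b L (z - proj z) ≤ wnorm b L (z - w))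
    (x : EuclideanSpace ℝ (Fin n)) :
    lyapunov b L F proj Fs (coordStep b L F i x)
      ≤ lyapunov b L F proj Fs x - ⟪x - proj x, blockProj b i (gradient F x)⟫ := by
  have hclose : wnormSq b L (coordStep b L F i x - proj (coordStep b L F i x))
      ≤ wnormSq b L (coordStep b L F i x - proj x) :=
    (wnorm_le_wnorm_iff fun j => (hL j).le).1 (hproj _ _ (hprojmem x))
  have hexpand : wnormSq b L (coordStep b L F i x - proj x)
      = wnormSq b L (x - proj x) - 2 * ⟪x - proj x, blockProj b i (gradient F x)⟫
        + 2 * (‖blockProj b i (gradient F x)‖ ^ 2 / (2 * L i)) := by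
    have hLi := (hL i).ne'
    rw [show coordStep b L F i x - proj x
        = (x - proj x) + -(1 / L i) • blockProj b i (gradient F x) by
      simp only [coordStep, neg_smul]; abel, wnormSq_add_smul_blockProj]
    field_simp
    ring
  have hdesc := image_coordStep_le (hL i) hF hlip x
  simp only [lyapunov]
  linarith

theorem sum_lyapunov_coordStep_le (hL : ∀ i, 0 < L i) (hconv : ConvexOn ℝ Set.univ F)
    (hF : Differentiable ℝ F)
    (hlip : ∀ (x h : EuclideanSpace ℝ (Fin n)) (i : Fin N), blockProj b i h = h →
      ‖blockProj b i (gradient F (x + h) - gradient F x)‖ ≤ L i * ‖h‖)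
    (hFs : ∀ z ∈ Xs, F z ≤ Fs) (hprojmem : ∀ z, proj z ∈ Xs)
    (hproj : ∀ z, ∀ w ∈ Xs, wnorm b L (z - proj z) ≤ wnorm b L (z - w))
    {κ : ℝ} (hκ : 0 < κ) (hgrowth : ∀ x, κ / 2 * wnormSq b L (x - proj x) ≤ F x - Fs)
    (x : EuclideanSpace ℝ (Fin n)) :
    ∑ i, lyapunov b L F proj Fs (coordStep b L F i x)
      ≤ (N - κ / (1 + κ)) * lyapunov b L F proj Fs x := by
  have hconv_x : F x - Fs ≤ ⟪x - proj x, gradient F x⟫ := by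
    have := hconv.inner_gradient_sub_le (hF x) (proj x)
    rw [← neg_sub, inner_neg_right, real_inner_comm] at this
    linarith [hFs _ (hprojmem x)]
  have hgrowth_x : κ / (1 + κ) * lyapunov b L F proj Fs x ≤ F x - Fs := by
    rw [div_mul_eq_mul_div, div_le_iff₀ (by positivity), lyapunov]
    linarith [hgrowth x]
  calc ∑ i, lyapunov b L F proj Fs (coordStep b L F i x)
      ≤ ∑ i, (lyapunov b L F proj Fs x - ⟪x - proj x, blockProj b i (gradient F x)⟫) :=
        Finset.sum_le_sum fun i _ =>
          lyapunov_coordStep_le hL hF (fun x h => hlip x h i) hprojmem hproj x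
    _ = N * lyapunov b L F proj Fs x - ⟪x - proj x, gradient F x⟫ := by
        rw [Finset.sum_sub_distrib, ← inner_sum, sum_blockProj]
        simp
    _ ≤ (N - κ / (1 + κ)) * lyapunov b L F proj Fs x := by linarith

end CoordinateDescent

theorem coordinate_descent_linear_rate_two_growth_general (n N : ℕ) (hN : 0 < N)
    (b : Fin n → Fin N) (L : Fin N → ℝ) (hL : ∀ i, 0 < L i)
    (Fγ : EuclideanSpace ℝ (Fin n) → ℝ)
    (hconv : ConvexOn ℝ Set.univ Fγ) (hdiff : Differentiable ℝ Fγ)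
    (hlip : ∀ (x h : EuclideanSpace ℝ (Fin n)) (i : Fin N), blockProj b i h = h →
      ‖blockProj b i (gradient Fγ (x + h) - gradient Fγ x)‖ ≤ L i * ‖h‖)
    (Xs : Set (EuclideanSpace ℝ (Fin n)))
    (Fs : ℝ) (hFs : ∀ z ∈ Xs, Fγ z ≤ Fs)
    (proj : EuclideanSpace ℝ (Fin n) → EuclideanSpace ℝ (Fin n))
    (hprojmem : ∀ z, proj z ∈ Xs)
    (hproj : ∀ z, ∀ w ∈ Xs, wnorm b L (z - proj z) ≤ wnorm b L (z - w))
    (κbar : ℝ) (hκ : 0 < κbar)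
    (hgrowth : ∀ x, κbar / 2 * wnormSq b L (x - proj x) ≤ Fγ x - Fs)
    (x₀ : EuclideanSpace ℝ (Fin n)) :
    ∀ k : ℕ,
      ((N : ℝ) ^ k)⁻¹ * ∑ ω : Fin k → Fin N,
          ((1 / 2) * wnormSq b L (traj (coordStep b L Fγ) x₀ k ω
              - proj (traj (coordStep b L Fγ) x₀ k ω))
            + Fγ (traj (coordStep b L Fγ) x₀ k ω) - Fs)
        ≤ (1 - κbar / ((N : ℝ) * (1 + κbar))) ^ k
            * ((1 / 2) * wnormSq b L (x₀ - proj x₀) + Fγ x₀ - Fs) := by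
  intro k
  have hN1 : (1 : ℝ) ≤ N := by exact_mod_cast hN
  have hcontract : 0 ≤ (N : ℝ) - κbar / (1 + κbar) := by
    have : κbar / (1 + κbar) ≤ 1 := div_le_one_of_le₀ (by linarith) (by positivity)
    linarith
  have hrate : (N : ℝ) - κbar / (1 + κbar) = N * (1 - κbar / (N * (1 + κbar))) := by
    field_simp
  have hsum := sum_traj_le_pow (coordStep b L Fγ) x₀ hcontract
    (sum_lyapunov_coordStep_le hL hconv hdiff hlip hFs hprojmem hproj hκ hgrowth) k
  rw [hrate, mul_pow] at hsum
  calc _ ≤ ((N : ℝ) ^ k)⁻¹ * ((N ^ k * (1 - κbar / (N * (1 + κbar))) ^ k)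
        * lyapunov b L Fγ proj Fs x₀) := mul_le_mul_of_nonneg_left hsum (by positivity)
    _ = _ := by
      rw [mul_assoc, inv_mul_cancel_left₀ (by positivity), lyapunov]

/-- under convexity, blockwise Lipschitz gradients and the `2`-growth
condition w.r.t. the weighted norm `‖·‖₁`, the random coordinate descent iterates satisfy,
in expectation over the uniformly random coordinate choices,
`E[½‖x_k − x̄_k‖₁² + F_γ(x_k) − F*] ≤ (1 − κ̄/(N(1+κ̄)))^k (½‖x₀ − x̄₀‖₁² + F_γ(x₀) − F*)`. -/
theorem coordinate_descent_linear_rate_two_growth (n N : ℕ) (hN : 0 < N)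
    (b : Fin n → Fin N) (L : Fin N → ℝ) (hL : ∀ i, 0 < L i)
    (Fγ : EuclideanSpace ℝ (Fin n) → ℝ)
    (hconv : ConvexOn ℝ Set.univ Fγ) (hdiff : Differentiable ℝ Fγ)
    (hlip : ∀ (x h : EuclideanSpace ℝ (Fin n)) (i : Fin N), blockProj b i h = h →
      ‖blockProj b i (gradient Fγ (x + h) - gradient Fγ x)‖ ≤ L i * ‖h‖)
    (Xs : Set (EuclideanSpace ℝ (Fin n)))
    (hXsne : Xs.Nonempty) (hXscl : IsClosed Xs) (hXsconv : Convex ℝ Xs)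
    (Fs : ℝ) (hFs : ∀ z ∈ Xs, Fγ z ≤ Fs)
    (proj : EuclideanSpace ℝ (Fin n) → EuclideanSpace ℝ (Fin n))
    (hprojmem : ∀ z, proj z ∈ Xs)
    (hproj : ∀ z, ∀ w ∈ Xs, wnorm b L (z - proj z) ≤ wnorm b L (z - w))
    (κbar : ℝ) (hκ : 0 < κbar)
    (hgrowth : ∀ x, κbar / 2 * wnormSq b L (x - proj x) ≤ Fγ x - Fs)
    (x₀ : EuclideanSpace ℝ (Fin n)) :
    ∀ k : ℕ,
      ((N : ℝ) ^ k)⁻¹ * ∑ ω : Fin k → Fin N,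
          ((1 / 2) * wnormSq b L (traj (coordStep b L Fγ) x₀ k ω
              - proj (traj (coordStep b L Fγ) x₀ k ω))
            + Fγ (traj (coordStep b L Fγ) x₀ k ω) - Fs)
        ≤ (1 - κbar / ((N : ℝ) * (1 + κbar))) ^ k
            * ((1 / 2) * wnormSq b L (x₀ - proj x₀) + Fγ x₀ - Fs) :=
  coordinate_descent_linear_rate_two_growth_general n N hN b L hL Fγ hconv hdiff hlip Xs Fs hFs proj
    hprojmem hproj κbar hκ hgrowth x₀
end
end
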